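/- Let z₀ ∈ ℝⁿ with ‖z₀‖₂ = 1, ν ∈ (0,1], and let R = {z ∈ S^{n−1} : ‖z − z₀‖² ≤ ν}. Suppose f : ℝⁿ → ℝ is twice continuously differentiable and its Riemannian Hessian on the sphere is positive definite at every z ∈ R, i.e., vᵀ∇²f(z)v − (zᵀ∇f(z))‖v‖² > 0 for all nonzero v with vᵀz = 0. Then f has at most one local minimizer on R. -/

import Mathlib

/-!
Two distinct points `z₁, z₂` of the cap are not antipodal (both have positive inner product with
`z₀`), so they are joined by a great-circle arc `γ(t) = cos t • z₁ + sin t • v`, `t ∈ [0, d]`,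
`0 < d < π`. The cap is geodesically convex because `ν ≤ 1`, so the arc stays in it. Along a
unit-speed great circle `γ'' = -γ`, hence `(f ∘ γ)''` is the Riemannian Hessian of `f` in the
direction `γ'`, which is positive: `f ∘ γ` is strictly convex on `[0, d]`. Local minima of `f` at
`z₁, z₂` give local, hence global, minima of `f ∘ γ` at both ends of `[0, d]`, contradicting
strict convexity.
-/

open Real Set

lemma StrictConvexOn.eq_of_isLocalMinOn {E β : Type*} [AddCommGroup E] [TopologicalSpace E]
    [Module ℝ E] [IsTopologicalAddGroup E] [ContinuousSMul ℝ E] [AddCommGroup β] [PartialOrder β]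
    [IsOrderedAddMonoid β] [Module ℝ β] [IsOrderedModule ℝ β] [PosSMulReflectLE ℝ β]
    {s : Set E} {f : E → β} {x y : E} (hf : StrictConvexOn ℝ s f) (hx : x ∈ s) (hy : y ∈ s)
    (hfx : IsLocalMinOn f s x) (hfy : IsLocalMinOn f s y) : x = y :=
  hf.eq_of_isMinOn (.of_isLocalMinOn_of_convexOn hx hfx hf.convexOn)
    (.of_isLocalMinOn_of_convexOn hy hfy hf.convexOn) hx hy

lemma ContDiff.deriv2_comp {E : Type*} [NormedAddCommGroup E] [NormedSpace ℝ E] {f : E → ℝ}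
    (hf : ContDiff ℝ 2 f) {γ γ' γ'' : ℝ → E} {t : ℝ} (hγ : ∀ s, HasDerivAt γ (γ' s) s)
    (hγ' : HasDerivAt γ' (γ'' t) t) :
    deriv^[2] (f ∘ γ) t
      = fderiv ℝ (fun w => fderiv ℝ f w (γ' t)) (γ t) (γ' t) + fderiv ℝ f (γ t) (γ'' t) := by
  have hf' : ContDiff ℝ 1 (fderiv ℝ f) := hf.fderiv_right (by norm_num)
  have hderiv : deriv (f ∘ γ) = fun s => fderiv ℝ f (γ s) (γ' s) := funext fun s =>
    ((hf.differentiable (by norm_num) (γ s)).hasFDerivAt.comp_hasDerivAt s (hγ s)).deriv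
  have hDf : HasDerivAt (fun s => fderiv ℝ f (γ s)) (fderiv ℝ (fderiv ℝ f) (γ t) (γ' t)) t :=
    (hf'.differentiable one_ne_zero (γ t)).hasFDerivAt.comp_hasDerivAt t (hγ t)
  rw [Function.iterate_succ_apply, Function.iterate_one, hderiv, (hDf.clm_apply hγ').deriv,
    fderiv_clm_apply (hf'.differentiable one_ne_zero (γ t)) (differentiableAt_const _)]
  simp

lemma le_cos_mul_add_sin_mul {κ a b d t : ℝ} (hκ : 0 ≤ κ) (hd : d ∈ Ioo 0 π) (ht : t ∈ Icc 0 d)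
    (ha : κ ≤ a) (hb : κ ≤ cos d * a + sin d * b) : κ ≤ cos t * a + sin t * b := by
  have hsin_t : 0 ≤ sin t := sin_nonneg_of_nonneg_of_le_pi ht.1 (by linarith [ht.2, hd.2])
  have hsin_dt : 0 ≤ sin (d - t) :=
    sin_nonneg_of_nonneg_of_le_pi (by linarith [ht.2]) (by linarith [ht.1, hd.2])
  have hsin_d : 0 < sin d := sin_pos_of_pos_of_lt_pi hd.1 hd.2
  have hsin_le : sin d ≤ sin (d - t) + sin t := by
    have : sin d = sin (d - t) * cos t + cos (d - t) * sin t := by rw [← sin_add, sub_add_cancel]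
    nlinarith [cos_le_one t, cos_le_one (d - t)]
  have hinterp : sin d * (cos t * a + sin t * b)
      = sin (d - t) * a + sin t * (cos d * a + sin d * b) := by
    rw [sin_sub]; ring
  refine le_of_mul_le_mul_left ?_ hsin_d
  rw [hinterp]
  nlinarith

section GreatCircle

variable {ι : Type*}

noncomputable def greatCircle (x v : ι → ℝ) (t : ℝ) : ι → ℝ := cos t • x + sin t • v

variable {x v : ι → ℝ}

@[simp] lemma greatCircle_zero (x v : ι → ℝ) : greatCircle x v 0 = x := by simp [greatCircle]

lemma greatCircle_neg_neg (x v : ι → ℝ) (t : ℝ) :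
    greatCircle (-x) (-v) t = -greatCircle x v t := by
  simp only [greatCircle, smul_neg, neg_add]

variable [Fintype ι]

lemma hasDerivAt_greatCircle (x v : ι → ℝ) (t : ℝ) :
    HasDerivAt (greatCircle x v) (greatCircle v (-x) t) t := by
  rw [show greatCircle v (-x) t = -sin t • x + cos t • v by
    simp only [greatCircle, smul_neg, neg_smul, add_comm]]
  exact ((hasDerivAt_cos t).smul_const x).add ((hasDerivAt_sin t).smul_const v)

lemma continuous_greatCircle (x v : ι → ℝ) : Continuous (greatCircle x v) :=
  continuous_iff_continuousAt.mpr fun t => (hasDerivAt_greatCircle x v t).continuousAt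

lemma greatCircle_dotProduct (x v y : ι → ℝ) (t : ℝ) :
    greatCircle x v t ⬝ᵥ y = cos t * (x ⬝ᵥ y) + sin t * (v ⬝ᵥ y) := by
  simp only [greatCircle, add_dotProduct, smul_dotProduct, smul_eq_mul]

lemma dotProduct_greatCircle (y x v : ι → ℝ) (t : ℝ) :
    y ⬝ᵥ greatCircle x v t = cos t * (y ⬝ᵥ x) + sin t * (y ⬝ᵥ v) := by
  simp only [greatCircle, dotProduct_add, dotProduct_smul, smul_eq_mul]

lemma greatCircle_dotProduct_self (hx : x ⬝ᵥ x = 1) (hv : v ⬝ᵥ v = 1) (hxv : x ⬝ᵥ v = 0)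
    (t : ℝ) : greatCircle x v t ⬝ᵥ greatCircle x v t = 1 := by
  simp only [greatCircle_dotProduct, dotProduct_greatCircle, dotProduct_comm v x, hx, hv, hxv]
  nlinarith [sin_sq_add_cos_sq t]

lemma greatCircle_tangent_dotProduct (hx : x ⬝ᵥ x = 1) (hv : v ⬝ᵥ v = 1) (hxv : x ⬝ᵥ v = 0)
    (t : ℝ) : greatCircle v (-x) t ⬝ᵥ greatCircle x v t = 0 := by
  simp only [greatCircle_dotProduct, dotProduct_greatCircle, neg_dotProduct, dotProduct_comm v x,
    hx, hv, hxv]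
  ring

lemma greatCircle_tangent_dotProduct_self (hx : x ⬝ᵥ x = 1) (hv : v ⬝ᵥ v = 1)
    (hxv : x ⬝ᵥ v = 0) (t : ℝ) : greatCircle v (-x) t ⬝ᵥ greatCircle v (-x) t = 1 :=
  greatCircle_dotProduct_self hv (by rw [neg_dotProduct, dotProduct_neg, neg_neg, hx])
    (by rw [dotProduct_neg, dotProduct_comm, hxv, neg_zero]) t

lemma exists_greatCircle_eq {y : ι → ℝ} (hx : x ⬝ᵥ x = 1) (hy : y ⬝ᵥ y = 1) (hxy : x ≠ y)
    (hyx : y ≠ -x) :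
    ∃ v : ι → ℝ, v ⬝ᵥ v = 1 ∧ x ⬝ᵥ v = 0 ∧ ∃ d ∈ Ioo 0 π, greatCircle x v d = y := by
  set c := x ⬝ᵥ y with hc
  have hpos : ∀ w : ι → ℝ, w ≠ 0 → 0 < w ⬝ᵥ w := fun w hw =>
    (Finset.sum_nonneg fun i _ => mul_self_nonneg (w i)).lt_of_ne
      (Ne.symm (dotProduct_self_eq_zero.not.mpr hw))
  have hc_lt : c < 1 := by
    have := hpos (x - y) (sub_ne_zero.mpr hxy)
    simp only [sub_dotProduct, dotProduct_sub, hx, hy, dotProduct_comm y x] at this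
    linarith
  have hc_gt : -1 < c := by
    have := hpos (x + y) (fun h => hyx (eq_neg_of_add_eq_zero_right h))
    simp only [add_dotProduct, dotProduct_add, hx, hy, dotProduct_comm y x] at this
    linarith
  set s := sin (arccos c) with hs
  have hs_pos : 0 < s := sin_pos_of_pos_of_lt_pi (arccos_pos.mpr hc_lt) (arccos_lt_pi.mpr hc_gt)
  have hs_sq : s ^ 2 = 1 - c ^ 2 := by
    rw [hs, sin_arccos, sq_sqrt (by nlinarith)]
  refine ⟨s⁻¹ • (y - c • x), ?_, ?_, arccos c, ⟨arccos_pos.mpr hc_lt, arccos_lt_pi.mpr hc_gt⟩, ?_⟩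
  · simp only [smul_dotProduct, dotProduct_smul, sub_dotProduct, dotProduct_sub, hx, hy,
      dotProduct_comm y x, ← hc, smul_eq_mul]
    field_simp
    linarith
  · simp only [dotProduct_smul, dotProduct_sub, hx, ← hc, smul_eq_mul]
    ring
  · rw [greatCircle, cos_arccos hc_gt.le hc_lt.le, smul_smul, mul_inv_cancel₀ hs_pos.ne',
      one_smul, add_sub_cancel]

lemma sum_sq_eq_dotProduct (z : ι → ℝ) : ∑ k, z k ^ 2 = z ⬝ᵥ z :=
  Finset.sum_congr rfl fun k _ => sq (z k)

def sphericalCap (z₀ : ι → ℝ) (κ : ℝ) : Set (ι → ℝ) := {z | z ⬝ᵥ z = 1 ∧ κ ≤ z ⬝ᵥ z₀}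

variable {z₀ : ι → ℝ} {κ : ℝ}

lemma setOf_sum_sq_eq_sphericalCap (hz₀ : z₀ ⬝ᵥ z₀ = 1) (ν : ℝ) :
    {z : ι → ℝ | ∑ k, z k ^ 2 = 1 ∧ ∑ k, (z k - z₀ k) ^ 2 ≤ ν} = sphericalCap z₀ (1 - ν / 2) := by
  ext z
  have hdist : ∑ k, (z k - z₀ k) ^ 2 = z ⬝ᵥ z - 2 * (z ⬝ᵥ z₀) + z₀ ⬝ᵥ z₀ := by
    have := sum_sq_eq_dotProduct (z - z₀)
    simp only [Pi.sub_apply] at this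
    rw [this, sub_dotProduct, dotProduct_sub, dotProduct_sub, dotProduct_comm z₀ z]
    ring
  show (_ ∧ _) ↔ (_ ∧ _)
  rw [hdist, sum_sq_eq_dotProduct, hz₀]
  constructor <;> rintro ⟨hz, h⟩ <;> exact ⟨hz, by linarith⟩

lemma neg_notMem_sphericalCap {z : ι → ℝ} (hκ : 0 < κ) (hz : z ∈ sphericalCap z₀ κ) :
    -z ∉ sphericalCap z₀ κ := fun hz' => by
  have := hz'.2
  rw [neg_dotProduct] at this
  linarith [hz.2]

lemma mapsTo_greatCircle_sphericalCap {d : ℝ} (hκ : 0 ≤ κ) (hx : x ⬝ᵥ x = 1)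
    (hv : v ⬝ᵥ v = 1) (hxv : x ⬝ᵥ v = 0) (hd : d ∈ Ioo 0 π) (h₀ : x ∈ sphericalCap z₀ κ)
    (h₁ : greatCircle x v d ∈ sphericalCap z₀ κ) :
    MapsTo (greatCircle x v) (Icc 0 d) (sphericalCap z₀ κ) := fun t ht => by
  refine ⟨greatCircle_dotProduct_self hx hv hxv t, ?_⟩
  have h₁' := h₁.2
  rw [greatCircle_dotProduct] at h₁' ⊢
  exact le_cos_mul_add_sin_mul hκ hd ht h₀.2 h₁'

/-- The Riemannian Hessian of `f` restricted to the unit sphere, at `z` in the direction `v`. -/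
noncomputable def sphericalHessian (f : (ι → ℝ) → ℝ) (z v : ι → ℝ) : ℝ :=
  fderiv ℝ (fun w => fderiv ℝ f w v) z v - fderiv ℝ f z z * (v ⬝ᵥ v)

variable {f : (ι → ℝ) → ℝ}

lemma deriv2_comp_greatCircle (hf : ContDiff ℝ 2 f) (hx : x ⬝ᵥ x = 1) (hv : v ⬝ᵥ v = 1)
    (hxv : x ⬝ᵥ v = 0) (t : ℝ) :
    deriv^[2] (f ∘ greatCircle x v) t
      = sphericalHessian f (greatCircle x v t) (greatCircle v (-x) t) := by
  rw [hf.deriv2_comp (hasDerivAt_greatCircle x v) (hasDerivAt_greatCircle v (-x) t),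
    greatCircle_neg_neg, map_neg, sphericalHessian,
    greatCircle_tangent_dotProduct_self hx hv hxv, mul_one, sub_eq_add_neg]

lemma strictConvexOn_comp_greatCircle (hf : ContDiff ℝ 2 f) (hx : x ⬝ᵥ x = 1)
    (hv : v ⬝ᵥ v = 1) (hxv : x ⬝ᵥ v = 0) {D : Set ℝ} (hD : Convex ℝ D)
    (hpos : ∀ t ∈ D, 0 < sphericalHessian f (greatCircle x v t) (greatCircle v (-x) t)) :
    StrictConvexOn ℝ D (f ∘ greatCircle x v) :=
  strictConvexOn_of_deriv2_pos' hD (hf.continuous.comp (continuous_greatCircle x v)).continuousOn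
    fun t ht => deriv2_comp_greatCircle hf hx hv hxv t ▸ hpos t ht

end GreatCircle

theorem stmt15 {n : ℕ} (z₀ : Fin n → ℝ) (hz₀ : ∑ k, z₀ k ^ 2 = 1)
    (ν : ℝ) (hν1 : ν ≤ 1)
    (f : (Fin n → ℝ) → ℝ) (hf : ContDiff ℝ 2 f)
    (R : Set (Fin n → ℝ))
    (hR : R = {z | ∑ k, z k ^ 2 = 1 ∧ ∑ k, (z k - z₀ k) ^ 2 ≤ ν})
    (hHess : ∀ z ∈ R, ∀ v : Fin n → ℝ, v ≠ 0 → ∑ k, v k * z k = 0 →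
      0 < fderiv ℝ (fun w => fderiv ℝ f w v) z v
        - (fderiv ℝ f z z) * ∑ k, v k ^ 2) :
    ∀ z₁ ∈ R, ∀ z₂ ∈ R, IsLocalMinOn f R z₁ → IsLocalMinOn f R z₂ → z₁ = z₂ := by
  rw [sum_sq_eq_dotProduct] at hz₀
  simp only [sum_sq_eq_dotProduct] at hHess
  subst hR
  rw [setOf_sum_sq_eq_sphericalCap hz₀] at hHess ⊢
  have hκ : 0 < 1 - ν / 2 := by linarith
  intro z₁ hz₁ z₂ hz₂ hmin₁ hmin₂
  by_contra hne
  obtain ⟨v, hv, hz₁v, d, hd, rfl⟩ := exists_greatCircle_eq hz₁.1 hz₂.1 hne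
    fun h => neg_notMem_sphericalCap hκ hz₁ (h ▸ hz₂)
  have hmaps := mapsTo_greatCircle_sphericalCap hκ.le hz₁.1 hv hz₁v hd hz₁ hz₂
  have hconvex : StrictConvexOn ℝ (Icc 0 d) (f ∘ greatCircle z₁ v) :=
    strictConvexOn_comp_greatCircle hf hz₁.1 hv hz₁v (convex_Icc 0 d) fun t ht =>
      hHess _ (hmaps ht) _
        (fun h => by simpa [h] using greatCircle_tangent_dotProduct_self hz₁.1 hv hz₁v t)
        (greatCircle_tangent_dotProduct hz₁.1 hv hz₁v t)
  have hcont := (continuous_greatCircle z₁ v).continuousOn (s := Icc 0 d)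
  have h0 : (0 : ℝ) ∈ Icc 0 d := left_mem_Icc.mpr hd.1.le
  have hd' : d ∈ Icc 0 d := right_mem_Icc.mpr hd.1.le
  rw [← greatCircle_zero z₁ v] at hmin₁
  exact hd.1.ne <| hconvex.eq_of_isLocalMinOn h0 hd'
    (hmin₁.comp_continuousOn hmaps hcont h0) (hmin₂.comp_continuousOn hmaps hcont hd')
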